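/- Let A be an m×n real matrix with m > n > 1 and full column rank, fix l ∈ {1,…,n}, and set y = A(AᵀA)⁻¹e_l, where e_l is the l-th standard basis vector of ℝ^n. Then for every index j, the minimum over c ∈ ℝ of ‖A(c·e_j) − y‖² equals ‖y‖² − 1/(AᵀA)_{ll} when j = l, and equals ‖y‖² when j ≠ l. In particular, the unique single column of A whose span best approximates y is the l-th column. -/

import Mathlib

open Matrix

/-!
Minimising `‖c • aⱼ - y‖²` over `c`, for the column `aⱼ` of `A`, leaves
`‖y‖² - (Aᵀ y)ⱼ² / (AᵀA)ⱼⱼ`, and full column rank makes `AᵀA` positive definite. For the given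
`y` we have `Aᵀ y = AᵀA (AᵀA)⁻¹ e_l = e_l`, so only column `l` reduces the residual, by
`1 / (AᵀA)ₗₗ > 0`.
-/

/-- The Euclidean norm of a vector in `Fin m → ℝ`. -/
noncomputable def euclNorm {m : ℕ} (v : Fin m → ℝ) : ℝ :=
  Real.sqrt (∑ i, v i ^ 2)

lemma euclNorm_sq {m : ℕ} (v : Fin m → ℝ) : euclNorm v ^ 2 = v ⬝ᵥ v := by
  rw [euclNorm, Real.sq_sqrt (Finset.sum_nonneg fun i _ => sq_nonneg (v i))]
  simp only [dotProduct, sq]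

lemma euclNorm_smul_sub_sq {m : ℕ} (a y : Fin m → ℝ) (c : ℝ) :
    euclNorm (c • a - y) ^ 2 = (a ⬝ᵥ a) * c ^ 2 - 2 * (a ⬝ᵥ y) * c + y ⬝ᵥ y := by
  simp only [euclNorm_sq, sub_dotProduct, dotProduct_sub, smul_dotProduct, dotProduct_smul,
    dotProduct_comm y a, smul_eq_mul]
  ring

/-- Completing the square, with minimiser `c = b / q`. -/
lemma ciInf_quadratic {q : ℝ} (hq : 0 < q) (b r : ℝ) :
    ⨅ c : ℝ, q * c ^ 2 - 2 * b * c + r = r - b ^ 2 / q := by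
  have hsq : ∀ c : ℝ, q * c ^ 2 - 2 * b * c + r = (q * c - b) ^ 2 / q + (r - b ^ 2 / q) := by
    intro c
    field_simp
    ring
  simp only [hsq]
  refine le_antisymm ?_ (le_ciInf fun c => le_add_of_nonneg_left (by positivity))
  calc ⨅ c : ℝ, (q * c - b) ^ 2 / q + (r - b ^ 2 / q)
      ≤ (q * (b / q) - b) ^ 2 / q + (r - b ^ 2 / q) :=
        ciInf_le ⟨r - b ^ 2 / q, by rintro _ ⟨c, rfl⟩; exact le_add_of_nonneg_left (by positivity)⟩ _
    _ = r - b ^ 2 / q := by field_simp; ring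

lemma iInf_euclNorm_mulVec_single_sub_sq {m n : ℕ} (A : Matrix (Fin m) (Fin n) ℝ)
    (y : Fin m → ℝ) {j : Fin n} (hj : 0 < (Aᵀ * A) j j) :
    ⨅ c : ℝ, euclNorm (A *ᵥ Pi.single j c - y) ^ 2
      = euclNorm y ^ 2 - (Aᵀ *ᵥ y) j ^ 2 / (Aᵀ * A) j j := by
  have hcol : ∀ c : ℝ, A *ᵥ Pi.single j c = c • A.col j := by
    intro c
    ext i
    simp [mul_comm]
  have hdiag : A.col j ⬝ᵥ A.col j = (Aᵀ * A) j j := by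
    simp [mul_apply, dotProduct]
  have hAty : A.col j ⬝ᵥ y = (Aᵀ *ᵥ y) j := by
    simp [mulVec, dotProduct]
  simp only [hcol, euclNorm_smul_sub_sq, hdiag, hAty, ← euclNorm_sq]
  exact ciInf_quadratic hj _ _

lemma mulVec_injective_of_rank_eq_card {K : Type*} [Field K] {m n : Type*} [Fintype m]
    [Fintype n] [DecidableEq n] {A : Matrix m n K} (hA : A.rank = Fintype.card n) :
    Function.Injective A.mulVec := by
  have hker : Module.finrank K (LinearMap.ker A.mulVecLin) = 0 := by
    have := LinearMap.finrank_range_add_finrank_ker A.mulVecLin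
    rw [← Matrix.rank, hA, Module.finrank_fintype_fun_eq_card] at this
    omega
  exact LinearMap.ker_eq_bot.mp (Submodule.finrank_eq_zero.mp hker)

theorem stmt_11_general {m n : ℕ}
    (A : Matrix (Fin m) (Fin n) ℝ) (hrank : A.rank = n) (l : Fin n)
    (y : Fin m → ℝ)
    (hy : y = A.mulVec ((Aᵀ * A)⁻¹.mulVec (Pi.single l 1))) :
    (∀ j : Fin n,
        (⨅ c : ℝ, euclNorm (A.mulVec (fun i => if i = j then c else 0) - y) ^ 2) =
          if j = l then euclNorm y ^ 2 - 1 / (Aᵀ * A) l l else euclNorm y ^ 2) ∧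
      ∀ j : Fin n, j ≠ l →
        (⨅ c : ℝ, euclNorm (A.mulVec (fun i => if i = l then c else 0) - y) ^ 2) <
          ⨅ c : ℝ, euclNorm (A.mulVec (fun i => if i = j then c else 0) - y) ^ 2 := by
  have hinj : Function.Injective A.mulVec :=
    mulVec_injective_of_rank_eq_card (by rw [hrank, Fintype.card_fin])
  have hpos : (Aᵀ * A).PosDef := by
    simpa using PosDef.conjTranspose_mul_self A hinj
  have hAty : Aᵀ *ᵥ y = Pi.single l 1 := by
    rw [hy, mulVec_mulVec, mulVec_mulVec,
      mul_nonsing_inv _ ((isUnit_iff_isUnit_det _).mp hpos.isUnit), one_mulVec]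
  have hmin : ∀ j, ⨅ c : ℝ, euclNorm (A *ᵥ (fun i => if i = j then c else 0) - y) ^ 2
      = euclNorm y ^ 2 - (Pi.single l 1 : Fin n → ℝ) j ^ 2 / (Aᵀ * A) j j := by
    intro j
    simp only [← Pi.single_apply, iInf_euclNorm_mulVec_single_sub_sq A y hpos.diag_pos, hAty]
  refine ⟨fun j => ?_, fun j hjl => ?_⟩
  · rw [hmin]
    split_ifs with hjl <;> simp [hjl]
  · rw [hmin, hmin, Pi.single_eq_same, Pi.single_eq_of_ne hjl, one_pow, zero_pow two_ne_zero,
      zero_div, sub_zero]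
    exact sub_lt_self _ (one_div_pos.mpr hpos.diag_pos)

theorem stmt_11 {m n : ℕ} (hmn : n < m) (hn : 1 < n)
    (A : Matrix (Fin m) (Fin n) ℝ) (hrank : A.rank = n) (l : Fin n)
    (y : Fin m → ℝ)
    (hy : y = A.mulVec ((Aᵀ * A)⁻¹.mulVec (Pi.single l 1))) :
    (∀ j : Fin n,
        (⨅ c : ℝ, euclNorm (A.mulVec (fun i => if i = j then c else 0) - y) ^ 2) =
          if j = l then euclNorm y ^ 2 - 1 / (Aᵀ * A) l l else euclNorm y ^ 2) ∧
      ∀ j : Fin n, j ≠ l →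
        (⨅ c : ℝ, euclNorm (A.mulVec (fun i => if i = l then c else 0) - y) ^ 2) <
          ⨅ c : ℝ, euclNorm (A.mulVec (fun i => if i = j then c else 0) - y) ^ 2 :=
  stmt_11_general A hrank l y hy
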